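/- Let M be a multiplication R-module and N₁, N₂ primary submodules of M. Then N₁ ∩ N₂ is a 2-absorbing primary submodule of M. -/

import Mathlib

/-!
The colon ideal `(N₁ ∩ N₂ : M) = (N₁ : M) ∩ (N₂ : M)` is an intersection of two primary ideals,
hence a 2-absorbing primary ideal. In a multiplication module this transfers to the submodule:
if `(ab)m ∈ N` and `Rm = JM`, then `abJ ⊆ (N : M)`, so every `j ∈ J` lies in
`(√(N : M) : a)` or in `(√(N : M) : b)`; an ideal covered by two ideals lies in one of them,
say `aJ ⊆ √(N : M)`, and then `am ∈ √(N : M) M ⊆ M-rad(N)`.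
-/

open Submodule

variable {R : Type*} [CommRing R] {M : Type*} [AddCommGroup M] [Module R M]

/-- A prime submodule: proper, and `a • m ∈ P` implies `m ∈ P` or `a • ⊤ ≤ P`. -/
def IsPrimeSubmodule (P : Submodule R M) : Prop :=
  P ≠ ⊤ ∧ ∀ (a : R) (m : M), a • m ∈ P → m ∈ P ∨ a ∈ P.colon ⊤

/-- The `M`-radical of `N`: intersection of prime submodules containing `N`
(equal to `⊤` when there are none). -/
def mRad (N : Submodule R M) : Submodule R M :=
  sInf {P : Submodule R M | IsPrimeSubmodule P ∧ N ≤ P}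

/-- 2-absorbing primary submodule. -/
def Is2AbsorbingPrimary (N : Submodule R M) : Prop :=
  N ≠ ⊤ ∧ ∀ (a b : R) (m : M), (a * b) • m ∈ N →
    a • m ∈ mRad N ∨ b • m ∈ mRad N ∨ a * b ∈ N.colon ⊤

/-- Multiplication module: every submodule is `I • ⊤` for some ideal `I`. -/
def IsMultiplicationModule (R M : Type*) [CommRing R] [AddCommGroup M] [Module R M] : Prop :=
  ∀ N : Submodule R M, ∃ I : Ideal R, N = I • (⊤ : Submodule R M)

/-- Primary submodule. -/
def IsPrimarySubmodule (P : Submodule R M) : Prop :=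
  P ≠ ⊤ ∧ ∀ (a : R) (m : M), a • m ∈ P → m ∈ P ∨ a ∈ (P.colon ⊤).radical

/-- 2-absorbing primary ideal. -/
def Is2AbsorbingPrimaryIdeal {R : Type*} [CommRing R] (I : Ideal R) : Prop :=
  I ≠ ⊤ ∧ ∀ a b c : R, a * b * c ∈ I → a * b ∈ I ∨ a * c ∈ I.radical ∨ b * c ∈ I.radical

/-- 2-absorbing submodule. -/
def Is2AbsorbingSubmodule (K : Submodule R M) : Prop :=
  K ≠ ⊤ ∧ ∀ (a b : R) (m : M), (a * b) • m ∈ K →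
    a * b ∈ K.colon ⊤ ∨ a • m ∈ K ∨ b • m ∈ K

lemma Submodule.colon_top_ne_top {N : Submodule R M} (h : N ≠ ⊤) : N.colon ⊤ ≠ ⊤ := by
  rw [Ne, colon_eq_top_iff_subset]
  exact fun hN => h (eq_top_iff.2 fun x _ => hN trivial)

lemma IsPrimeSubmodule.isPrime_colon {P : Submodule R M} (hP : IsPrimeSubmodule P) :
    (P.colon ⊤).IsPrime := by
  refine ⟨colon_top_ne_top hP.1, fun {x y} hxy => or_iff_not_imp_left.2 fun hx => ?_⟩
  refine mem_colon.2 fun z _ => (hP.2 x (y • z) ?_).resolve_right hx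
  rw [smul_smul]
  exact mem_colon.1 hxy z trivial

lemma IsPrimarySubmodule.isPrimary_colon {N : Submodule R M} (hN : IsPrimarySubmodule N) :
    (N.colon ⊤).IsPrimary := by
  refine Ideal.isPrimary_iff.2 ⟨colon_top_ne_top hN.1, fun {x y} hxy => ?_⟩
  refine or_iff_not_imp_right.2 fun hy => mem_colon.2 fun z _ => ?_
  refine (hN.2 y (x • z) ?_).resolve_right hy
  rw [smul_smul, mul_comm]
  exact mem_colon.1 hxy z trivial

lemma radical_colon_smul_top_le_mRad (N : Submodule R M) :
    (N.colon ⊤).radical • (⊤ : Submodule R M) ≤ mRad N := by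
  refine le_sInf fun P ⟨hP, hNP⟩ => smul_le.2 fun r hr x _ => ?_
  have hle : (N.colon ⊤).radical ≤ P.colon ⊤ :=
    hP.isPrime_colon.radical_le_iff.2 (colon_mono hNP le_rfl)
  exact mem_colon.1 (hle hr) x trivial

namespace Ideal.IsPrimary

variable {q₁ q₂ : Ideal R}

lemma mul_mem_radical_inf_of_mul_notMem_left (h₁ : q₁.IsPrimary) (h₂ : q₂.IsPrimary)
    {a b c : R} (habc : a * b * c ∈ q₁ ⊓ q₂) (hab : a * b ∉ q₁) :
    a * c ∈ (q₁ ⊓ q₂).radical ∨ b * c ∈ (q₁ ⊓ q₂).radical := by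
  rw [radical_inf]
  have hc₁ : c ∈ q₁.radical := ((isPrimary_iff.1 h₁).2 habc.1).resolve_left hab
  rcases (isPrime_radical h₂).mem_or_mem (le_radical habc.2) with hab₂ | hc₂
  · rcases (isPrime_radical h₂).mem_or_mem hab₂ with ha₂ | hb₂
    · exact Or.inl ⟨mul_mem_left _ a hc₁, mul_mem_right c _ ha₂⟩
    · exact Or.inr ⟨mul_mem_left _ b hc₁, mul_mem_right c _ hb₂⟩
  · exact Or.inl ⟨mul_mem_left _ a hc₁, mul_mem_left _ a hc₂⟩

lemma is2AbsorbingPrimaryIdeal_inf (h₁ : q₁.IsPrimary) (h₂ : q₂.IsPrimary) :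
    Is2AbsorbingPrimaryIdeal (q₁ ⊓ q₂) := by
  refine ⟨ne_top_of_le_ne_top h₁.ne_top inf_le_left, fun a b c habc => ?_⟩
  by_cases hab₁ : a * b ∈ q₁
  · by_cases hab₂ : a * b ∈ q₂
    · exact Or.inl ⟨hab₁, hab₂⟩
    · rw [inf_comm] at habc ⊢
      exact Or.inr (mul_mem_radical_inf_of_mul_notMem_left h₂ h₁ habc hab₂)
  · exact Or.inr (mul_mem_radical_inf_of_mul_notMem_left h₁ h₂ habc hab₁)

end Ideal.IsPrimary

section MultiplicationModule

variable {N : Submodule R M} {J : Ideal R} {m : M}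

lemma mul_mem_colon_of_smul_mem (hJ : J • (⊤ : Submodule R M) ≤ span R {m}) {r j : R}
    (hr : r • m ∈ N) (hj : j ∈ J) : r * j ∈ N.colon ⊤ := by
  refine mem_colon.2 fun z _ => ?_
  obtain ⟨s, hs⟩ := mem_span_singleton.1 (hJ (smul_mem_smul hj mem_top))
  rw [mul_smul, ← hs, smul_comm]
  exact N.smul_mem s hr

lemma smul_mem_mRad_of_le_colon (hm : m ∈ J • (⊤ : Submodule R M)) {c : R}
    (hc : J ≤ (N.colon ⊤).radical.colon {c}) : c • m ∈ mRad N := by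
  refine radical_colon_smul_top_le_mRad N ?_
  refine smul_induction_on hm (fun j hj x _ => ?_) (fun x y hx hy => ?_)
  · rw [← mul_smul, mul_comm]
    exact smul_mem_smul (mem_colon_singleton.1 (hc hj)) mem_top
  · rw [smul_add]
    exact add_mem hx hy

theorem is2AbsorbingPrimary_of_colon (hM : IsMultiplicationModule R M)
    (hN : Is2AbsorbingPrimaryIdeal (N.colon ⊤)) : Is2AbsorbingPrimary N := by
  refine ⟨fun h => hN.1 (by rw [h, top_colon]), fun a b m habm => ?_⟩
  by_cases hab : a * b ∈ N.colon ⊤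
  · exact Or.inr (Or.inr hab)
  obtain ⟨J, hJ⟩ := hM (span R {m})
  have hcover : (J : Set R) ⊆ (N.colon ⊤).radical.colon {a} ∪ (N.colon ⊤).radical.colon {b} :=
    fun j hj => by
      simpa only [Set.mem_union, SetLike.mem_coe, mem_colon_singleton, smul_eq_mul, mul_comm j]
        using (hN.2 a b j (mul_mem_colon_of_smul_mem hJ.ge habm hj)).resolve_left hab
  have hm : m ∈ J • (⊤ : Submodule R M) := hJ ▸ mem_span_singleton_self m
  rcases Ideal.subset_union.1 hcover with ha | hb
  · exact Or.inl (smul_mem_mRad_of_le_colon hm ha)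
  · exact Or.inr (Or.inl (smul_mem_mRad_of_le_colon hm hb))

end MultiplicationModule

theorem stmt14 (hM : IsMultiplicationModule R M) (N₁ N₂ : Submodule R M)
    (h₁ : IsPrimarySubmodule N₁) (h₂ : IsPrimarySubmodule N₂) :
    Is2AbsorbingPrimary (N₁ ⊓ N₂) := by
  refine is2AbsorbingPrimary_of_colon hM ?_
  rw [inf_colon]
  exact h₁.isPrimary_colon.is2AbsorbingPrimaryIdeal_inf h₂.isPrimary_colon
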